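/- Let α be an irrational number not equivalent to (1+√5)/2 and not equivalent to (1+√17)/2. If the continued fraction expansion α = [a₀; a₁, a₂, …] has aₙ ≥ 5 for infinitely many n, then 𝔨(α) ≤ 4/5. -/

import Mathlib

open Filter

/-- The tails `αₙ = [aₙ; aₙ₊₁, …]` of the continued fraction of `α`. -/
noncomputable def cfTail (α : ℝ) : ℕ → ℝ
  | 0 => α
  | n + 1 => (Int.fract (cfTail α n))⁻¹

/-- The partial quotients `aₙ` of the continued fraction of `α`. -/
noncomputable def cfDigit (α : ℝ) (n : ℕ) : ℤ := ⌊cfTail α n⌋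

/-- Value `[a; b, c, …]` of a finite continued fraction given by a list. -/
noncomputable def finCF : List ℤ → ℝ
  | [] => 0
  | a :: l => (a : ℝ) + (finCF l)⁻¹

/-- `α*ₙ = [0; aₙ, aₙ₋₁, …, a₁]`. -/
noncomputable def cfStar (α : ℝ) (n : ℕ) : ℝ :=
  (finCF (((List.range' 1 n).reverse).map (cfDigit α)))⁻¹

/-- Numerators `pₙ` of the convergents of `α`. -/
noncomputable def cfNum (α : ℝ) : ℕ → ℤ
  | 0 => cfDigit α 0
  | 1 => cfDigit α 1 * cfDigit α 0 + 1
  | n + 2 => cfDigit α (n + 2) * cfNum α (n + 1) + cfNum α n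

/-- Denominators `qₙ` of the convergents of `α`. -/
noncomputable def cfDen (α : ℝ) : ℕ → ℤ
  | 0 => 1
  | 1 => cfDigit α 1
  | n + 2 => cfDigit α (n + 2) * cfDen α (n + 1) + cfDen α n

/-- The irrationality measure function `ψ_α^[2]` for "second best" approximations. -/
noncomputable def psi2 (α : ℝ) (t : ℝ) : ℝ :=
  sInf { x : ℝ | ∃ p q : ℤ, 1 ≤ q ∧ (q : ℝ) ≤ t ∧
    (∀ n : ℕ, (p, q) ≠ (cfNum α n, cfDen α n)) ∧ x = |(q : ℝ) * α - (p : ℝ)| }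

/-- The Diophantine constant `𝔨(α) = liminf_{t → ∞} t · ψ_α^[2](t)`. -/
noncomputable def kConst (α : ℝ) : ℝ := liminf (fun t : ℝ => t * psi2 α t) atTop

/-- Two numbers are equivalent if the tails of their continued fraction expansions
coincide: `a_{n+k} = b_{m+k}` for all `k ≥ 1`, for some positive integers `m`, `n`. -/
def CFEquiv (α β : ℝ) : Prop :=
  ∃ n m : ℕ, 0 < n ∧ 0 < m ∧ ∀ k : ℕ, 0 < k → cfDigit α (n + k) = cfDigit β (m + k)

/-- The spectrum `𝕃₂` of values of `𝔨`. -/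
def L2 : Set ℝ := { l : ℝ | ∃ α : ℝ, Irrational α ∧ l = kConst α }

/-- `κ¹ₙ(α) = (1 + α*ₙ₋₁)(αₙ − 1)/(αₙ + α*ₙ₋₁)`. -/
noncomputable def kappa1 (α : ℝ) (n : ℕ) : ℝ :=
  (1 + cfStar α (n - 1)) * (cfTail α n - 1) / (cfTail α n + cfStar α (n - 1))

/-- `κ²ₙ(α) = (1 − α*ₙ)(αₙ₊₁ + 1)/(αₙ₊₁ + α*ₙ)`. -/
noncomputable def kappa2 (α : ℝ) (n : ℕ) : ℝ :=
  (1 - cfStar α n) * (cfTail α (n + 1) + 1) / (cfTail α (n + 1) + cfStar α n)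

/-- `κ⁴ₙ(α) = 4/(αₙ + α*ₙ₋₁)`. -/
noncomputable def kappa4 (α : ℝ) (n : ℕ) : ℝ :=
  4 / (cfTail α n + cfStar α (n - 1))

/-!
Let `q = qₙ₋₁` with `aₙ ≥ 5`. The pair `(2pₙ₋₁, 2qₙ₋₁)` is not a convergent,
since convergents are in lowest terms. So `ψ_α^[2](2q) ≤ 2|qα − pₙ₋₁| = 2/(αₙ q + qₙ₋₂) ≤ 2/(5q)`,
and `t · ψ_α^[2](t) ≤ 4/5` at `t = 2q`. As such `n` are unbounded and `qₙ₋₁ → ∞`, the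
liminf is at most `4/5`.
-/

section ContinuedFraction

variable {α : ℝ}

lemma cfTail_succ (α : ℝ) (n : ℕ) : cfTail α (n + 1) = (Int.fract (cfTail α n))⁻¹ := rfl

lemma Irrational.cfTail (hα : Irrational α) : ∀ n, Irrational (cfTail α n)
  | 0 => hα
  | n + 1 => by
      rw [cfTail_succ, Int.fract]
      exact ((hα.cfTail n).sub_intCast _).inv

lemma one_lt_cfTail_succ (hα : Irrational α) (n : ℕ) : 1 < cfTail α (n + 1) := by
  have hfract : 0 < Int.fract (cfTail α n) :=
    Int.fract_pos.2 fun h => (hα.cfTail n).ne_int _ h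
  exact one_lt_inv_iff₀.2 ⟨hfract, Int.fract_lt_one _⟩

lemma one_le_cfDigit_succ (hα : Irrational α) (n : ℕ) : 1 ≤ cfDigit α (n + 1) :=
  Int.le_floor.2 (by exact_mod_cast (one_lt_cfTail_succ hα n).le)

lemma cfTail_mul_cfTail_succ (hα : Irrational α) (n : ℕ) :
    cfTail α n * cfTail α (n + 1) = cfDigit α n * cfTail α (n + 1) + 1 := by
  have hne : cfTail α (n + 1) ≠ 0 := (zero_lt_one.trans (one_lt_cfTail_succ hα n)).ne'
  have hfract : cfTail α n - cfDigit α n = (cfTail α (n + 1))⁻¹ := by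
    rw [cfTail_succ, inv_inv, cfDigit, Int.self_sub_floor]
  rw [← sub_eq_iff_eq_add', ← sub_mul, hfract, inv_mul_cancel₀ hne]

lemma one_le_cfDen (hα : Irrational α) : ∀ n, 1 ≤ cfDen α n
  | 0 => le_rfl
  | 1 => one_le_cfDigit_succ hα 0
  | n + 2 => by
      have h1 := one_le_cfDen hα (n + 1)
      have h2 := one_le_cfDen hα n
      have h3 : 1 ≤ cfDigit α (n + 2) := one_le_cfDigit_succ hα (n + 1)
      rw [cfDen]
      nlinarith

lemma natCast_le_cfDen (hα : Irrational α) : ∀ n : ℕ, (n : ℤ) ≤ cfDen α n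
  | 0 => zero_le_one
  | 1 => one_le_cfDigit_succ hα 0
  | n + 2 => by
      have h1 : ((n + 1 : ℕ) : ℤ) ≤ cfDen α (n + 1) := natCast_le_cfDen hα (n + 1)
      have h2 := one_le_cfDen hα n
      have h3 : 1 ≤ cfDigit α (n + 2) := one_le_cfDigit_succ hα (n + 1)
      rw [cfDen]
      push_cast at h1 ⊢
      nlinarith

lemma cfNum_mul_cfDen_sub (α : ℝ) : ∀ n,
    cfNum α (n + 1) * cfDen α n - cfNum α n * cfDen α (n + 1) = (-1) ^ n
  | 0 => by simp only [cfNum, cfDen, pow_zero]; ring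
  | n + 1 => by
      rw [cfNum, cfDen, pow_succ]
      linear_combination -cfNum_mul_cfDen_sub α n

lemma isCoprime_cfNum_cfDen (α : ℝ) (n : ℕ) : IsCoprime (cfNum α n) (cfDen α n) :=
  ⟨-(-1) ^ n * cfDen α (n + 1), (-1) ^ n * cfNum α (n + 1), by
    linear_combination (-1) ^ n * cfNum_mul_cfDen_sub α n +
      pow_mul_pow_eq_one n (by norm_num : (-1 : ℤ) * -1 = 1)⟩

lemma cfTail_mobius (hα : Irrational α) : ∀ n,
    (cfTail α (n + 2) * cfDen α (n + 1) + cfDen α n) * α =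
      cfTail α (n + 2) * cfNum α (n + 1) + cfNum α n
  | 0 => by
      have h0 : α * cfTail α 1 = cfDigit α 0 * cfTail α 1 + 1 := cfTail_mul_cfTail_succ hα 0
      have h1 := cfTail_mul_cfTail_succ hα 1
      simp only [cfNum, cfDen]
      push_cast
      linear_combination cfTail α 2 * h0 - (α - cfDigit α 0) * h1
  | n + 1 => by
      have h : cfTail α (n + 2) * cfTail α (n + 3) = cfDigit α (n + 2) * cfTail α (n + 3) + 1 :=
        cfTail_mul_cfTail_succ hα (n + 2)
      simp only [cfNum, cfDen]
      push_cast
      linear_combination cfTail α (n + 3) * cfTail_mobius hα n -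
        (cfDen α (n + 1) * α - cfNum α (n + 1)) * h

lemma abs_cfDen_mul_sub_cfNum (hα : Irrational α) (n : ℕ) :
    |cfDen α (n + 1) * α - cfNum α (n + 1)| =
      (cfTail α (n + 2) * cfDen α (n + 1) + cfDen α n)⁻¹ := by
  have hdet : ((cfDen α (n + 1) * α - cfNum α (n + 1)) *
      (cfTail α (n + 2) * cfDen α (n + 1) + cfDen α n)) = -(-1) ^ n := by
    have := congrArg (fun z : ℤ => (z : ℝ)) (cfNum_mul_cfDen_sub α n)
    push_cast at this
    linear_combination cfDen α (n + 1) * cfTail_mobius hα n - this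
  have hpos : 0 < cfTail α (n + 2) * cfDen α (n + 1) + cfDen α n := by
    have := one_lt_cfTail_succ hα (n + 1)
    have : (1 : ℝ) ≤ cfDen α (n + 1) := by exact_mod_cast one_le_cfDen hα (n + 1)
    have : (1 : ℝ) ≤ cfDen α n := by exact_mod_cast one_le_cfDen hα n
    positivity
  refine eq_inv_of_mul_eq_one_left ?_
  rw [← abs_of_pos hpos, ← abs_mul, hdet, abs_neg, abs_neg_one_pow]

end ContinuedFraction

section SecondBest

variable {α : ℝ}

lemma psi2_le {p q : ℤ} {t : ℝ} (hq : 1 ≤ q) (hqt : (q : ℝ) ≤ t)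
    (hp : ∀ n : ℕ, (p, q) ≠ (cfNum α n, cfDen α n)) : psi2 α t ≤ |q * α - p| :=
  csInf_le ⟨0, by rintro x ⟨p, q, -, -, -, rfl⟩; positivity⟩ ⟨p, q, hq, hqt, hp, rfl⟩

lemma psi2_nonneg (α t : ℝ) : 0 ≤ psi2 α t :=
  Real.sInf_nonneg (by rintro x ⟨p, q, -, -, -, rfl⟩; positivity)

lemma kConst_le_of_frequently {c : ℝ} (h : ∃ᶠ t in atTop, t * psi2 α t ≤ c) :
    kConst α ≤ c :=
  liminf_le_of_frequently_le h
    ⟨0, eventually_map.2 <| (eventually_ge_atTop 0).mono fun t ht =>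
      mul_nonneg ht (psi2_nonneg α t)⟩

lemma mul_ne_convergent {k : ℤ} (hk : ¬IsUnit k) (p q : ℤ) (n : ℕ) :
    (k * p, k * q) ≠ (cfNum α n, cfDen α n) := by
  intro h
  simp only [Prod.mk.injEq] at h
  have := isCoprime_cfNum_cfDen α n
  rw [← h.1, ← h.2] at this
  exact hk (this.isUnit_of_dvd' (dvd_mul_right k p) (dvd_mul_right k q))

lemma two_cfDen_mul_psi2_le (hα : Irrational α) (n : ℕ) :
    2 * cfDen α (n + 1) * psi2 α (2 * cfDen α (n + 1)) ≤ 4 / cfDigit α (n + 2) := by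
  have hq : (1 : ℝ) ≤ cfDen α (n + 1) := by exact_mod_cast one_le_cfDen hα (n + 1)
  have hq' : (0 : ℝ) ≤ cfDen α n := by exact_mod_cast zero_le_one.trans (one_le_cfDen hα n)
  have ha : (1 : ℝ) ≤ cfDigit α (n + 2) := by exact_mod_cast one_le_cfDigit_succ hα (n + 1)
  have hfloor : (cfDigit α (n + 2) : ℝ) ≤ cfTail α (n + 2) := Int.floor_le _
  have hpsi : psi2 α (2 * cfDen α (n + 1)) ≤ 2 * |cfDen α (n + 1) * α - cfNum α (n + 1)| := by
    have := psi2_le (α := α) (p := 2 * cfNum α (n + 1)) (q := 2 * cfDen α (n + 1))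
      (t := 2 * cfDen α (n + 1)) (by linarith [one_le_cfDen hα (n + 1)]) (by push_cast; rfl)
      (mul_ne_convergent (by rw [Int.isUnit_iff]; omega) _ _)
    rwa [Int.cast_mul, Int.cast_mul, Int.cast_two, mul_assoc, ← mul_sub, abs_mul,
      abs_two] at this
  calc _ ≤ 2 * cfDen α (n + 1) * (2 * |cfDen α (n + 1) * α - cfNum α (n + 1)|) := by gcongr
    _ = 4 * cfDen α (n + 1) / (cfTail α (n + 2) * cfDen α (n + 1) + cfDen α n) := by
      rw [abs_cfDen_mul_sub_cfNum hα n]; ring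
    _ ≤ 4 * cfDen α (n + 1) / (cfDigit α (n + 2) * cfDen α (n + 1)) := by
      gcongr
      nlinarith
    _ = 4 / cfDigit α (n + 2) := by field_simp

end SecondBest

theorem stmt_11_general (α : ℝ) (hα : Irrational α)
    (hbig : ∃ᶠ n in atTop, 5 ≤ cfDigit α n) :
    kConst α ≤ 4 / 5 := by
  refine kConst_le_of_frequently (frequently_atTop.2 fun b => ?_)
  obtain ⟨_, hn, h5⟩ := frequently_atTop.1 hbig (⌈b⌉₊ + 2)
  obtain ⟨n, rfl⟩ := Nat.exists_eq_add_of_le' (le_of_add_le_right hn)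
  refine ⟨2 * (cfDen α (n + 1) : ℝ), ?_, ?_⟩
  · have hb : ((⌈b⌉₊ : ℤ) : ℝ) ≤ cfDen α (n + 1) := by
      exact_mod_cast le_trans (by omega) (natCast_le_cfDen hα (n + 1))
    push_cast at hb
    linarith [Nat.le_ceil b, (⌈b⌉₊).cast_nonneg (α := ℝ)]
  · refine (two_cfDen_mul_psi2_le hα n).trans ?_
    gcongr
    exact_mod_cast h5

/-- If `α` is irrational, equivalent neither to `(1+√5)/2` nor to `(1+√17)/2`,
and `aₙ ≥ 5` for infinitely many `n`, then `𝔨(α) ≤ 4/5`. -/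
theorem stmt_11 (α : ℝ) (hα : Irrational α)
    (h5 : ¬ CFEquiv α ((1 + Real.sqrt 5) / 2))
    (h17 : ¬ CFEquiv α ((1 + Real.sqrt 17) / 2))
    (hbig : ∃ᶠ n in atTop, 5 ≤ cfDigit α n) :
    kConst α ≤ 4 / 5 :=
  stmt_11_general α hα hbig
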